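/- (Containment of a violator stretch in one SDMMSA block) Suppose Ȳ_j > Ȳ_{j+1} for some j ∈ [1,k−1]. Let j_l be the smallest integer such that Ȳ_i = Ȳ_j for all i ∈ [j_l, j], and let j_u be the largest integer such that Ȳ_i = Ȳ_{j+1} for all i ∈ [j+1, j_u]. Then the interval [j_l, j_u] is contained in a single block of the SDMMSA partition: there exists u ∈ [1,h] with [j_l, j_u] ⊆ [i_u, i_{u−1}−1]. -/

import Mathlib

open Finset

noncomputable section SDMMSA

/-- Pooled weight `n_{i,j} = ∑_{h=i}^j n_h`. -/
def pooledWeight (n : ℕ → ℝ) (i j : ℕ) : ℝ := ∑ h ∈ Finset.Icc i j, n h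

/-- Pooled (weighted) mean `Ȳ_{i,j} = (∑_{h=i}^j n_h Y_h) / n_{i,j}`. -/
def pooledMean (n Y : ℕ → ℝ) (i j : ℕ) : ℝ :=
  (∑ h ∈ Finset.Icc i j, n h * Y h) / pooledWeight n i j

/-- The first SDMMSA index for the data `(Y_1,n_1),…,(Y_t,n_t)`:
the smallest `j ∈ [1,t]` at which `Ȳ_{j,t} = max_{1 ≤ j' ≤ t} Ȳ_{j',t}`. -/
def firstIdx (n Y : ℕ → ℝ) (t : ℕ) : ℕ :=
  sInf {j | 1 ≤ j ∧ j ≤ t ∧ ∀ j', 1 ≤ j' → j' ≤ t → pooledMean n Y j' t ≤ pooledMean n Y j t}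

/-- Fuel-based recursion implementing the SDMMSA step-down procedure: on data range `[1,t]`,
every `i ≥ i₁ = firstIdx n Y t` gets the pooled mean `Ȳ_{i₁,t}` of the top block, and for
`i < i₁` we recurse on the data range `[1, i₁ - 1]`.  A fuel of `t` suffices since the
range shrinks strictly at each step. -/
def sdmmsaAux (n Y : ℕ → ℝ) : ℕ → ℕ → ℕ → ℝ
  | 0, _, _ => 0
  | fuel + 1, t, i =>
      if firstIdx n Y t ≤ i then pooledMean n Y (firstIdx n Y t) t
      else sdmmsaAux n Y fuel (firstIdx n Y t - 1) i

/-- `muhat n Y k i` is the SDMMSA estimate `μ̂_i` computed from the data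
`(Y_1,n_1),…,(Y_k,n_k)`. -/
def muhat (n Y : ℕ → ℝ) (k i : ℕ) : ℝ := sdmmsaAux n Y k k i

/-- The SDMMSA indices `i_u` computed from the data `(Y_1,n_1),…,(Y_k,n_k)`:
`sdIdx n Y k 0 = i_0 = k+1` and `i_{u+1}` is the first SDMMSA index of `[1, i_u - 1]`. -/
def sdIdx (n Y : ℕ → ℝ) (k : ℕ) : ℕ → ℕ
  | 0 => k + 1
  | u + 1 => firstIdx n Y (sdIdx n Y k u - 1)

/-- The number of steps `h` of the SDMMSA: the first `u` with `i_u = 1`. -/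
def sdSteps (n Y : ℕ → ℝ) (k : ℕ) : ℕ := sInf {u | sdIdx n Y k u = 1}

/-! Suppose some `m ∈ (j_l, j_u]` maximized `j' ↦ Ȳ_{j',t}` for a `t ≥ j_u`. Then
`Ȳ_{m,t} ≤ Ȳ_{m,j_u}`, since otherwise `Ȳ_{j_u+1,t}` would be larger. The values on
`[j_l, j_u]` are nonincreasing with `Y_{j_l} > Y_{j_u}`, so `Ȳ_{m,j_u} < Ȳ_{j_l,m-1}`, and pooling
`[j_l, m-1]` with `[m, t]` gives `Ȳ_{j_l,t} > Ȳ_{m,t}`, a contradiction. Hence no SDMMSA index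
`i_u` lies in `(j_l, j_u]`: the first one that is `≤ j_l` follows one that is `> j_u`. -/

section Mediant

variable {α : Type*} [Field α] [LinearOrder α] [IsStrictOrderedRing α] {a b c d : α}

theorem div_lt_add_div_add_of_div_lt (hb : 0 < b) (hd : 0 < d) (h : c / d < a / b) :
    c / d < (a + c) / (b + d) := by
  rw [div_lt_div_iff₀ hd hb] at h
  rw [div_lt_div_iff₀ hd (add_pos hb hd)]
  linarith

theorem add_div_add_le_div_of_div_le (hb : 0 < b) (hd : 0 < d)
    (h : c / d ≤ (a + c) / (b + d)) : (a + c) / (b + d) ≤ a / b := by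
  rw [div_le_div_iff₀ hd (add_pos hb hd)] at h
  rw [div_le_div_iff₀ (add_pos hb hd) hb]
  linarith

end Mediant

theorem Finset.sum_Icc_consecutive {M : Type*} [AddCommMonoid M] (f : ℕ → M) {i p t : ℕ}
    (hip : i ≤ p + 1) (hpt : p ≤ t) :
    ∑ h ∈ Icc i p, f h + ∑ h ∈ Icc (p + 1) t, f h = ∑ h ∈ Icc i t, f h := by
  simp only [← Ico_add_one_right_eq_Icc]
  exact sum_Ico_consecutive f hip (by omega)

section PooledMean

variable {n Y : ℕ → ℝ} {i p t : ℕ}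

theorem pooledWeight_pos (hn : ∀ h ∈ Icc i t, 0 < n h) (hit : i ≤ t) :
    0 < pooledWeight n i t :=
  sum_pos hn (nonempty_Icc.2 hit)

theorem pooledMean_eq_of_forall_eq {c : ℝ} (hn : ∀ h ∈ Icc i t, 0 < n h) (hit : i ≤ t)
    (hY : ∀ h ∈ Icc i t, Y h = c) : pooledMean n Y i t = c := by
  rw [pooledMean, div_eq_iff (pooledWeight_pos hn hit).ne', pooledWeight, mul_sum]
  exact sum_congr rfl fun h hh => by rw [hY h hh, mul_comm]

theorem pooledMean_lt_of_forall_le {c : ℝ} (hn : ∀ h ∈ Icc i t, 0 < n h) (hit : i ≤ t)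
    (hle : ∀ h ∈ Icc i t, Y h ≤ c) (hlt : ∃ h ∈ Icc i t, Y h < c) :
    pooledMean n Y i t < c := by
  rw [pooledMean, div_lt_iff₀' (pooledWeight_pos hn hit), pooledWeight, sum_mul]
  obtain ⟨h₀, hh₀, hY₀⟩ := hlt
  exact sum_lt_sum (fun h hh => mul_le_mul_of_nonneg_left (hle h hh) (hn h hh).le)
    ⟨h₀, hh₀, mul_lt_mul_of_pos_left hY₀ (hn h₀ hh₀)⟩

theorem lt_pooledMean_of_forall_le {c : ℝ} (hn : ∀ h ∈ Icc i t, 0 < n h) (hit : i ≤ t)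
    (hle : ∀ h ∈ Icc i t, c ≤ Y h) (hlt : ∃ h ∈ Icc i t, c < Y h) :
    c < pooledMean n Y i t := by
  rw [pooledMean, lt_div_iff₀' (pooledWeight_pos hn hit), pooledWeight, sum_mul]
  obtain ⟨h₀, hh₀, hY₀⟩ := hlt
  exact sum_lt_sum (fun h hh => mul_le_mul_of_nonneg_left (hle h hh) (hn h hh).le)
    ⟨h₀, hh₀, mul_lt_mul_of_pos_left hY₀ (hn h₀ hh₀)⟩

theorem pooledMean_split (hip : i ≤ p) (hpt : p ≤ t) :
    pooledMean n Y i t = (∑ h ∈ Icc i p, n h * Y h + ∑ h ∈ Icc (p + 1) t, n h * Y h) /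
      (pooledWeight n i p + pooledWeight n (p + 1) t) := by
  rw [pooledMean, pooledWeight, pooledWeight, pooledWeight,
    sum_Icc_consecutive _ (by omega) hpt, sum_Icc_consecutive _ (by omega) hpt]

theorem pooledMean_right_lt_of_lt (hn : ∀ h ∈ Icc i t, 0 < n h) (hip : i ≤ p) (hpt : p < t)
    (h : pooledMean n Y (p + 1) t < pooledMean n Y i p) :
    pooledMean n Y (p + 1) t < pooledMean n Y i t := by
  rw [pooledMean_split hip hpt.le]
  exact div_lt_add_div_add_of_div_lt
    (pooledWeight_pos (fun h hh => hn h (Icc_subset_Icc_right hpt.le hh)) hip)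
    (pooledWeight_pos (fun h hh => hn h (Icc_subset_Icc_left (by omega) hh)) hpt) h

theorem pooledMean_le_left_of_right_le (hn : ∀ h ∈ Icc i t, 0 < n h) (hip : i ≤ p)
    (hpt : p < t) (h : pooledMean n Y (p + 1) t ≤ pooledMean n Y i t) :
    pooledMean n Y i t ≤ pooledMean n Y i p := by
  rw [pooledMean_split hip hpt.le] at h ⊢
  exact add_div_add_le_div_of_div_le
    (pooledWeight_pos (fun h hh => hn h (Icc_subset_Icc_right hpt.le hh)) hip)
    (pooledWeight_pos (fun h hh => hn h (Icc_subset_Icc_left (by omega) hh)) hpt) h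

end PooledMean

structure IsViolatorStretch (Y : ℕ → ℝ) (jl j ju : ℕ) : Prop where
  left_le : jl ≤ j
  lt_right : j + 1 ≤ ju
  violates : Y (j + 1) < Y j
  const_left : ∀ i, jl ≤ i → i ≤ j → Y i = Y j
  const_right : ∀ i, j + 1 ≤ i → i ≤ ju → Y i = Y (j + 1)

namespace IsViolatorStretch

variable {n Y : ℕ → ℝ} {jl j ju : ℕ}

theorem apply_mem_Icc (hs : IsViolatorStretch Y jl j ju) {h : ℕ} (hh : h ∈ Icc jl ju) :
    Y h ∈ Set.Icc (Y (j + 1)) (Y j) := by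
  rw [mem_Icc] at hh
  rcases le_or_gt h j with hhj | hjh
  · rw [hs.const_left h hh.1 hhj]
    exact ⟨hs.violates.le, le_rfl⟩
  · rw [hs.const_right h hjh hh.2]
    exact ⟨le_rfl, hs.violates.le⟩

theorem pooledMean_right_lt_left (hs : IsViolatorStretch Y jl j ju) {p : ℕ}
    (hn : ∀ h ∈ Icc jl ju, 0 < n h) (hjlp : jl ≤ p) (hpju : p < ju) :
    pooledMean n Y (p + 1) ju < pooledMean n Y jl p := by
  have hn_left : ∀ h ∈ Icc jl p, 0 < n h := fun h hh => hn h (Icc_subset_Icc_right hpju.le hh)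
  have hn_right : ∀ h ∈ Icc (p + 1) ju, 0 < n h :=
    fun h hh => hn h (Icc_subset_Icc_left (by omega) hh)
  rcases lt_or_ge p j with hpj | hjp
  · rw [pooledMean_eq_of_forall_eq hn_left hjlp
      fun h hh => hs.const_left h (mem_Icc.1 hh).1 ((mem_Icc.1 hh).2.trans_lt hpj).le]
    refine pooledMean_lt_of_forall_le hn_right hpju
      (fun h hh => (hs.apply_mem_Icc (Icc_subset_Icc_left (by omega) hh)).2) ⟨ju, ?_, ?_⟩
    · simp only [mem_Icc]; omega
    · rw [hs.const_right ju hs.lt_right le_rfl]; exact hs.violates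
  · rw [pooledMean_eq_of_forall_eq hn_right hpju fun h hh =>
      hs.const_right h ((Nat.succ_le_succ hjp).trans (mem_Icc.1 hh).1) (mem_Icc.1 hh).2]
    refine lt_pooledMean_of_forall_le hn_left hjlp
      (fun h hh => (hs.apply_mem_Icc (Icc_subset_Icc_right hpju.le hh)).1) ⟨jl, ?_, ?_⟩
    · simp only [mem_Icc]; omega
    · rw [hs.const_left jl le_rfl hs.left_le]; exact hs.violates

theorem exists_pooledMean_gt (hs : IsViolatorStretch Y jl j ju) {t m : ℕ}
    (hn : ∀ h ∈ Icc 1 t, 0 < n h) (hjl1 : 1 ≤ jl) (hjut : ju ≤ t) (hm : m ∈ Ioc jl ju) :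
    ∃ j' ∈ Icc 1 t, pooledMean n Y m t < pooledMean n Y j' t := by
  rw [mem_Ioc] at hm
  obtain ⟨p, rfl⟩ : ∃ p, m = p + 1 := ⟨m - 1, by omega⟩
  by_contra! hmax
  have hmean_le_block : pooledMean n Y (p + 1) t ≤ pooledMean n Y (p + 1) ju := by
    rcases hjut.eq_or_lt with rfl | hjut
    · exact le_rfl
    · exact pooledMean_le_left_of_right_le
        (fun h hh => hn h (Icc_subset_Icc (by omega) le_rfl hh))
        hm.2 hjut (hmax (ju + 1) (by simp only [mem_Icc]; omega))
  have hblock_lt := hs.pooledMean_right_lt_left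
    (fun h hh => hn h (Icc_subset_Icc hjl1 hjut hh)) (by omega) (by omega : p < ju)
  have hlt := pooledMean_right_lt_of_lt (fun h hh => hn h (Icc_subset_Icc hjl1 le_rfl hh))
    (by omega : jl ≤ p) (by omega : p < t) (hmean_le_block.trans_lt hblock_lt)
  exact (hmax jl (by simp only [mem_Icc]; omega)).not_gt hlt

end IsViolatorStretch

section StepDown

variable {n Y : ℕ → ℝ}

theorem firstIdx_zero : firstIdx n Y 0 = 0 :=
  Nat.sInf_eq_zero.2 <| .inr <| Set.eq_empty_of_forall_notMem fun _ ⟨_, _, _⟩ => by omega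

theorem firstIdx_spec {t : ℕ} (ht : 1 ≤ t) :
    1 ≤ firstIdx n Y t ∧ firstIdx n Y t ≤ t ∧ ∀ j', 1 ≤ j' → j' ≤ t →
      pooledMean n Y j' t ≤ pooledMean n Y (firstIdx n Y t) t := by
  obtain ⟨b, hb, hmax⟩ := exists_max_image (Icc 1 t) (fun j => pooledMean n Y j t)
    (nonempty_Icc.2 ht)
  rw [mem_Icc] at hb
  exact Nat.sInf_mem (s := {j | 1 ≤ j ∧ j ≤ t ∧
      ∀ j', 1 ≤ j' → j' ≤ t → pooledMean n Y j' t ≤ pooledMean n Y j t})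
    ⟨b, hb.1, hb.2, fun j' h1 h2 => hmax j' (mem_Icc.2 ⟨h1, h2⟩)⟩

theorem firstIdx_le (t : ℕ) : firstIdx n Y t ≤ t := by
  rcases Nat.eq_zero_or_pos t with rfl | ht
  · exact firstIdx_zero.le
  · exact (firstIdx_spec ht).2.1

theorem sdIdx_succ_le (k u : ℕ) : sdIdx n Y k (u + 1) ≤ sdIdx n Y k u - 1 :=
  firstIdx_le _

theorem sdIdx_le (k u : ℕ) : sdIdx n Y k u ≤ k + 1 - u := by
  induction u with
  | zero => exact le_rfl
  | succ u ih => have := sdIdx_succ_le (n := n) (Y := Y) k u; omega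

theorem sdIdx_antitone (k : ℕ) : Antitone (sdIdx n Y k) :=
  antitone_nat_of_succ_le fun u => (sdIdx_succ_le k u).trans (Nat.sub_le _ _)

theorem exists_sdIdx_eq_one {k : ℕ} (hk : 1 ≤ k) : ∃ u, sdIdx n Y k u = 1 := by
  obtain ⟨u, hu, hu_succ⟩ := Nat.exists_not_and_succ_of_not_zero_of_exists
    (p := fun u => sdIdx n Y k u ≤ 1) (by rw [sdIdx]; omega)
    ⟨k, by have := sdIdx_le (n := n) (Y := Y) k k; omega⟩
  exact ⟨u + 1, le_antisymm hu_succ (firstIdx_spec (by omega : 1 ≤ sdIdx n Y k u - 1)).1⟩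

theorem sdIdx_sdSteps {k : ℕ} (hk : 1 ≤ k) : sdIdx n Y k (sdSteps n Y k) = 1 :=
  Nat.sInf_mem (exists_sdIdx_eq_one hk)

theorem lt_sdIdx_of_lt_sdIdx {k j jl ju : ℕ} (hs : IsViolatorStretch Y jl j ju)
    (hn : ∀ h ∈ Icc 1 k, 0 < n h) (hjl1 : 1 ≤ jl) (hjuk : ju ≤ k) {v : ℕ}
    (hv : jl < sdIdx n Y k v) : ju < sdIdx n Y k v := by
  induction v with
  | zero => rw [sdIdx]; omega
  | succ v ih =>
    have hprev := ih (hv.trans_le (sdIdx_antitone k v.le_succ))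
    have hjut : ju ≤ sdIdx n Y k v - 1 := by omega
    have htk : sdIdx n Y k v - 1 ≤ k := by have := sdIdx_le (n := n) (Y := Y) k v; omega
    rw [sdIdx] at hv ⊢
    by_contra! hle
    obtain ⟨j', hj', hlt⟩ := hs.exists_pooledMean_gt
      (fun h hh => hn h (Icc_subset_Icc_right htk hh)) hjl1 hjut (mem_Ioc.2 ⟨hv, hle⟩)
    rw [mem_Icc] at hj'
    exact ((firstIdx_spec (by omega)).2.2 j' hj'.1 hj'.2).not_gt hlt

end StepDown

theorem violator_stretch_in_one_block_general (k : ℕ) (hk : 1 ≤ k) (n Y : ℕ → ℝ)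
    (hn : ∀ h, 1 ≤ h → h ≤ k → 0 < n h)
    (j : ℕ) (hviol : Y (j + 1) < Y j)
    (jl ju : ℕ)
    (hjl1 : 1 ≤ jl) (hjlj : jl ≤ j)
    (hjlconst : ∀ i, jl ≤ i → i ≤ j → Y i = Y j)
    (hju1 : j + 1 ≤ ju) (hjuk : ju ≤ k)
    (hjuconst : ∀ i, j + 1 ≤ i → i ≤ ju → Y i = Y (j + 1)) :
    ∃ u, 1 ≤ u ∧ u ≤ sdSteps n Y k ∧
      sdIdx n Y k u ≤ jl ∧ ju ≤ sdIdx n Y k (u - 1) - 1 := by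
  have hsteps : sdIdx n Y k (sdSteps n Y k) ≤ jl := (sdIdx_sdSteps hk).trans_le hjl1
  obtain ⟨u, hu, hu_succ⟩ := Nat.exists_not_and_succ_of_not_zero_of_exists
    (p := fun u => sdIdx n Y k u ≤ jl) (by rw [sdIdx]; omega) ⟨_, hsteps⟩
  have hu_steps : u + 1 ≤ sdSteps n Y k := by
    by_contra! h
    exact hu ((sdIdx_antitone k (Nat.le_of_lt_succ h)).trans hsteps)
  have hju := lt_sdIdx_of_lt_sdIdx ⟨hjlj, hju1, hviol, hjlconst, hjuconst⟩
    (fun h hh => hn h (mem_Icc.1 hh).1 (mem_Icc.1 hh).2) hjl1 hjuk (not_le.1 hu)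
  refine ⟨u + 1, by omega, hu_steps, hu_succ, ?_⟩
  rw [Nat.add_sub_cancel]
  omega

/-- a violator stretch `[j_l, j_u]` (as in one PAVA pooling step) is contained
in a single block `[i_u, i_{u-1} - 1]` of the SDMMSA partition. -/
theorem violator_stretch_in_one_block (k : ℕ) (hk : 1 ≤ k) (n Y : ℕ → ℝ)
    (hn : ∀ h, 1 ≤ h → h ≤ k → 0 < n h)
    (j : ℕ) (hj1 : 1 ≤ j) (hjk : j + 1 ≤ k) (hviol : Y (j + 1) < Y j)
    (jl ju : ℕ)
    (hjl1 : 1 ≤ jl) (hjlj : jl ≤ j)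
    (hjlconst : ∀ i, jl ≤ i → i ≤ j → Y i = Y j)
    (hjlmin : ∀ i', 1 ≤ i' → i' ≤ j → (∀ i, i' ≤ i → i ≤ j → Y i = Y j) → jl ≤ i')
    (hju1 : j + 1 ≤ ju) (hjuk : ju ≤ k)
    (hjuconst : ∀ i, j + 1 ≤ i → i ≤ ju → Y i = Y (j + 1))
    (hjumax : ∀ u', u' ≤ k → (∀ i, j + 1 ≤ i → i ≤ u' → Y i = Y (j + 1)) → u' ≤ ju) :
    ∃ u, 1 ≤ u ∧ u ≤ sdSteps n Y k ∧
      sdIdx n Y k u ≤ jl ∧ ju ≤ sdIdx n Y k (u - 1) - 1 :=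
  violator_stretch_in_one_block_general k hk n Y hn j hviol jl ju hjl1 hjlj hjlconst hju1 hjuk
    hjuconst
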